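/- Let n be even, ξ the indicator that letters {1,…,n/2} occupy vertices {1,…,n/2}, and E the L-reversal Dirichlet form. Then E(√ξ, √ξ) = E(ξ, ξ) ≤ (C L / n) ν[ξ] for a universal constant C; consequently the log-Sobolev constant s(n,L) satisfies s(n,L) ≥ n^2/(C' L). -/

import Mathlib

def segRev {n : ℕ} {α : Type*} (x h : ℕ) (η : Fin n → α) : Fin n → α := fun y =>
  if (y.val + n - x % n) % n ≤ h then
    η ⟨(x + h - (y.val + n - x % n) % n) % n, Nat.mod_lt _ y.pos⟩
  else η y

/-- The event that letters `{0,…,n/2−1}` occupy exactly the vertices `{0,…,n/2−1}`. -/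
def halfEvent (n : ℕ) (η : Fin n → Fin n) : Prop :=
  ∀ x : Fin n, x.val < n / 2 ↔ (η x).val < n / 2

instance {n : ℕ} : DecidablePred (halfEvent n) := fun η => by
  unfold halfEvent; infer_instance

/-- The indicator `ξ` of the half-occupation event. -/
def xiInd (n : ℕ) (η : Fin n → Fin n) : ℝ := if halfEvent n η then 1 else 0

/-- Expectation under the uniform measure on permutations of `n` letters. -/
noncomputable def pexp (n : ℕ) (f : Equiv.Perm (Fin n) → ℝ) : ℝ :=
  (∑ η : Equiv.Perm (Fin n), f η) / (Nat.factorial n : ℝ)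

/-- The `L`-reversal Dirichlet form `E(f,f) = (1/(2nL)) Σ_x Σ_{ℓ≤L} ν[(R_{x,ℓ} f)²]`. -/
noncomputable def dirL (n L : ℕ) (f : (Fin n → Fin n) → ℝ) : ℝ :=
  (1 / (2 * (n : ℝ) * (L : ℝ))) * ∑ x ∈ Finset.range n, ∑ ℓ ∈ Finset.Icc 1 L,
    (∑ η : Equiv.Perm (Fin n), (f (segRev x ℓ ⇑η) - f ⇑η) ^ 2) / (Nat.factorial n : ℝ)

/-- The entropy `Ent(f) = ν[f log f] − ν[f] log ν[f]` of a function of configurations. -/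
noncomputable def entF (n : ℕ) (f : (Fin n → Fin n) → ℝ) : ℝ :=
  pexp n (fun η => f ⇑η * Real.log (f ⇑η)) -
    pexp n (fun η => f ⇑η) * Real.log (pexp n (fun η => f ⇑η))

/-!
A reversal `R_{x,ℓ}` can change `ξ` only if the reversed arc `x, …, x + ℓ` meets the boundary of
the half `{0, …, n/2 - 1}`, which happens for at most `2L` starting points `x`; since reversals
preserve the uniform measure, each such term is at most `2 ν[ξ]`, whence `E(ξ, ξ) ≤ (2L/n) ν[ξ]`.
For the log-Sobolev constant test `f = ξ + p⁶` with `p = ν[ξ] ≤ 2^{-n/2}`: its entropy is at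
least `-(p log p)/2 ≥ pn/8`, while `E(√f, √f) ≤ 2Lp/n` by the same count, so
`s(n, L) ≥ n²/(16L)`. The supremum is finite because reversals of length one are the adjacent
transpositions, which generate the symmetric group.
-/

open Finset
open scoped BigOperators Nat

lemma abs_sub_mul_prod_le {G : Type*} [Monoid G] {S : Set G} {u : G → ℝ} {B : ℝ}
    (hstep : ∀ g, ∀ s ∈ S, |u (g * s) - u g| ≤ B) :
    ∀ l : List G, (∀ s ∈ l, s ∈ S) → ∀ g, |u (g * l.prod) - u g| ≤ l.length * B
  | [], _, g => by simp
  | s :: t, hl, g => by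
    have ih := abs_sub_mul_prod_le hstep t (fun s' hs' => hl s' (List.mem_cons_of_mem s hs'))
      (g * s)
    have hs := hstep g s (hl s List.mem_cons_self)
    rw [List.prod_cons, ← mul_assoc, List.length_cons, Nat.cast_succ]
    calc |u (g * s * t.prod) - u g|
        ≤ |u (g * s * t.prod) - u (g * s)| + |u (g * s) - u g| := abs_sub_le _ _ _
      _ ≤ (t.length + 1) * B := by linarith

lemma exists_abs_sub_le_mul_of_mclosure_eq_top {G : Type*} [Monoid G] [Finite G] {S : Set G}
    (hS : Submonoid.closure S = ⊤) :
    ∃ D : ℕ, ∀ (u : G → ℝ) (B : ℝ), 0 ≤ B → (∀ g, ∀ s ∈ S, |u (g * s) - u g| ≤ B) →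
      ∀ g, |u g - u 1| ≤ D * B := by
  have hword : ∀ g : G, ∃ l : List G, (∀ s ∈ l, s ∈ S) ∧ l.prod = g := fun g =>
    Submonoid.exists_list_of_mem_closure (hS ▸ Submonoid.mem_top g)
  choose w hwS hwg using hword
  obtain ⟨D, hD⟩ := (Set.finite_range fun g => (w g).length).bddAbove
  refine ⟨D, fun u B hB hstep g => ?_⟩
  have hg := abs_sub_mul_prod_le hstep (w g) (hwS g) 1
  rw [one_mul, hwg] at hg
  exact hg.trans (mul_le_mul_of_nonneg_right (by exact_mod_cast hD ⟨g, rfl⟩) hB)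

lemma sq_sub_sq_sq_le {a b A M : ℝ} (ha : 0 ≤ a) (hb : 0 ≤ b) (hab : |a - b| ≤ A)
    (haM : a ≤ M) (hbM : b ≤ M) : (a ^ 2 - b ^ 2) ^ 2 ≤ 4 * A ^ 2 * M ^ 2 := by
  have h₁ : (a - b) ^ 2 ≤ A ^ 2 := sq_le_sq' (abs_le.mp hab).1 (abs_le.mp hab).2
  have h₂ : (a + b) ^ 2 ≤ (2 * M) ^ 2 := pow_le_pow_left₀ (by positivity) (by linarith) 2
  calc (a ^ 2 - b ^ 2) ^ 2 = (a - b) ^ 2 * (a + b) ^ 2 := by ring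
    _ ≤ A ^ 2 * (2 * M) ^ 2 := mul_le_mul h₁ h₂ (by positivity) (by positivity)
    _ = 4 * A ^ 2 * M ^ 2 := by ring

lemma mul_log_sub_mul_log_le {a m : ℝ} (ha : 0 < a) (hm : 0 < m) :
    a * Real.log a - a * Real.log m ≤ a ^ 2 / m - a := by
  have h := Real.log_le_sub_one_of_pos (div_pos ha hm)
  rw [Real.log_div ha.ne' hm.ne'] at h
  calc a * Real.log a - a * Real.log m = a * (Real.log a - Real.log m) := by ring
    _ ≤ a * (a / m - 1) := mul_le_mul_of_nonneg_left h ha.le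
    _ = a ^ 2 / m - a := by ring

lemma entropy_two_point_ge {p δ : ℝ} (hp : 0 < p) (hδ : 0 < δ) (hpδ : p + δ ≤ 1) :
    -(p * Real.log p) - δ + δ * Real.log δ ≤
      p * ((1 + δ) * Real.log (1 + δ)) + (1 - p) * (δ * Real.log δ) -
        (p + δ) * Real.log (p + δ) := by
  have h₁ : 0 ≤ p * ((1 + δ) * Real.log (1 + δ)) := by
    have := Real.log_nonneg (by linarith : (1 : ℝ) ≤ 1 + δ); positivity
  have h₂ : δ * Real.log δ ≤ 0 := mul_nonpos_of_nonneg_of_nonpos hδ.le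
    (Real.log_nonpos hδ.le (by linarith))
  have h₃ : δ * Real.log (p + δ) ≤ 0 := mul_nonpos_of_nonneg_of_nonpos hδ.le
    (Real.log_nonpos (by linarith) hpδ)
  have h₄ : p * (Real.log (p + δ) - Real.log p) ≤ δ := by
    have h := Real.log_le_sub_one_of_pos (div_pos (by linarith : 0 < p + δ) hp)
    rw [Real.log_div (by linarith) hp.ne'] at h
    calc _ ≤ p * ((p + δ) / p - 1) := mul_le_mul_of_nonneg_left h hp.le
      _ = δ := by field_simp; ring
  nlinarith

/-- With `δ = p⁶` the loss `δ - δ log δ` in `entropy_two_point_ge` stays below `-(p log p)/2`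
for every `p ≤ 1/2`, including `p = 1/2`, the case `n = 2`. -/
lemma neg_mul_log_le_two_mul_entropy_two_point {p : ℝ} (hp : 0 < p) (hp2 : p ≤ 1 / 2) :
    -(p * Real.log p) ≤
      2 * (p * ((1 + p ^ 6) * Real.log (1 + p ^ 6)) + (1 - p) * (p ^ 6 * Real.log (p ^ 6)) -
        (p + p ^ 6) * Real.log (p + p ^ 6)) := by
  have hp5 : p ^ 5 ≤ 1 / 32 := by
    calc p ^ 5 ≤ (1 / 2) ^ 5 := pow_le_pow_left₀ hp.le hp2 5
      _ = 1 / 32 := by norm_num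
  have hs : 1 / 2 ≤ -Real.log p := by
    have := Real.log_le_log hp hp2
    rw [one_div, Real.log_inv] at this
    linarith [Real.log_two_gt_d9]
  have hp6 : p ^ 6 ≤ p / 32 := by nlinarith [pow_succ p 5]
  have hkey : (1 / 2) * (p - 12 * p ^ 6) ≤ -Real.log p * (p - 12 * p ^ 6) :=
    mul_le_mul_of_nonneg_right hs (by linarith)
  have h := entropy_two_point_ge hp (by positivity) (by linarith : p + p ^ 6 ≤ 1)
  rw [Real.log_pow] at h ⊢
  push_cast at h ⊢
  nlinarith

lemma two_pow_le_centralBinom (k : ℕ) : 2 ^ k ≤ Nat.centralBinom k := by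
  induction k with
  | zero => simp
  | succ k ih =>
    refine Nat.le_of_mul_le_mul_left ?_ k.succ_pos
    rw [Nat.succ_mul_centralBinom_succ, pow_succ]
    nlinarith

lemma mod_eq_ite_of_lt_two_mul {n a : ℕ} (ha : a < 2 * n) :
    a % n = if a < n then a else a - n := by
  split_ifs with han
  · exact Nat.mod_eq_of_lt han
  · rw [Nat.mod_eq_sub_mod (by omega), Nat.mod_eq_of_lt (by omega)]

section Reversal

variable {n x h : ℕ}

def cycleOffset (n x y : ℕ) : ℕ := if x ≤ y then y - x else y + n - x

lemma add_sub_mod_eq_cycleOffset {y : ℕ} (hx : x < n) (hy : y < n) :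
    (y + n - x) % n = cycleOffset n x y := by
  unfold cycleOffset
  split_ifs with hxy
  · rw [show y + n - x = y - x + n by omega, Nat.add_mod_right, Nat.mod_eq_of_lt (by omega)]
  · exact Nat.mod_eq_of_lt (by omega)

/-- `segRev x h η` reverses `η` on the arc `x, x + 1, …, x + h` of the cycle: the vertex at
clockwise offset `d ≤ h` from `x` reads the vertex at offset `h - d`. -/
lemma val_segRev_id (hx : x < n) (hh : h ≤ n) (y : Fin n) :
    (segRev x h (id : Fin n → Fin n) y).val =
      if cycleOffset n x y ≤ h then
        if x + h - cycleOffset n x y < n then x + h - cycleOffset n x y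
        else x + h - cycleOffset n x y - n
      else y := by
  simp only [segRev, Nat.mod_eq_of_lt hx, add_sub_mod_eq_cycleOffset hx y.isLt]
  unfold cycleOffset
  split_ifs <;> first | rfl | exact mod_eq_ite_of_lt_two_mul (by omega)

lemma segRev_id_involutive (hx : x < n) (hh : h ≤ n) :
    Function.Involutive (segRev x h (id : Fin n → Fin n)) := by
  intro y
  have hv := val_segRev_id hx hh y
  have := (segRev x h (id : Fin n → Fin n) y).isLt
  ext
  rw [val_segRev_id hx hh]
  unfold cycleOffset at hv ⊢
  split_ifs at hv ⊢ <;> omega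

lemma segRev_one_id_eq_swap (hx : x + 1 < n) :
    segRev x 1 (id : Fin n → Fin n) = Equiv.swap ⟨x, by omega⟩ ⟨x + 1, hx⟩ := by
  funext y
  have := y.isLt
  ext
  rw [val_segRev_id (by omega) (by omega), Equiv.swap_apply_def]
  unfold cycleOffset
  split_ifs <;> simp_all [Fin.ext_iff] <;> omega

lemma val_segRev_id_lt_half_iff (hx : x < n) (hh : h ≤ n)
    (hhalf : x + h < n / 2 ∨ n / 2 ≤ x ∧ x + h < n) (y : Fin n) :
    (segRev x h (id : Fin n → Fin n) y).val < n / 2 ↔ y.val < n / 2 := by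
  have := y.isLt
  rw [val_segRev_id hx hh]
  unfold cycleOffset
  split_ifs <;> omega

lemma segRev_eq_comp {α : Type*} (η : Fin n → α) :
    segRev x h η = η ∘ segRev x h (id : Fin n → Fin n) := by
  funext y
  simp only [segRev, Function.comp_apply]
  split_ifs <;> rfl

def revPerm (hx : x < n) (hh : h ≤ n) : Equiv.Perm (Fin n) :=
  (segRev_id_involutive hx hh).toPerm

lemma segRev_coe_perm (hx : x < n) (hh : h ≤ n) (σ : Equiv.Perm (Fin n)) :
    segRev x h ⇑σ = ⇑(σ * revPerm hx hh) :=
  segRev_eq_comp _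

lemma segRev_one_coe_perm {m : ℕ} (i : Fin m) (σ : Equiv.Perm (Fin (m + 1))) :
    segRev i 1 ⇑σ = ⇑(σ * Equiv.swap i.castSucc i.succ) := by
  rw [segRev_eq_comp, segRev_one_id_eq_swap (by omega)]
  rfl

end Reversal

section Uniform

variable {n x h L : ℕ}

lemma pexp_eq_expect (g : Equiv.Perm (Fin n) → ℝ) : pexp n g = 𝔼 σ, g σ := by
  rw [Fintype.expect_eq_sum_div_card, Fintype.card_perm, Fintype.card_fin, pexp]

lemma pexp_const (a : ℝ) : pexp n (fun _ => a) = a := by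
  rw [pexp_eq_expect, expect_const univ_nonempty]

lemma pexp_add (g₁ g₂ : Equiv.Perm (Fin n) → ℝ) :
    pexp n (fun σ => g₁ σ + g₂ σ) = pexp n g₁ + pexp n g₂ := by
  simp only [pexp_eq_expect, expect_add_distrib]

lemma pexp_sub (g₁ g₂ : Equiv.Perm (Fin n) → ℝ) :
    pexp n (fun σ => g₁ σ - g₂ σ) = pexp n g₁ - pexp n g₂ := by
  simp only [pexp_eq_expect, expect_sub_distrib]

lemma pexp_mul_const (g : Equiv.Perm (Fin n) → ℝ) (a : ℝ) :
    pexp n (fun σ => g σ * a) = pexp n g * a := by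
  simp only [pexp_eq_expect, expect_mul]

lemma pexp_const_mul (a : ℝ) (g : Equiv.Perm (Fin n) → ℝ) :
    pexp n (fun σ => a * g σ) = a * pexp n g := by
  simp only [pexp_eq_expect, mul_expect]

lemma pexp_div_const (g : Equiv.Perm (Fin n) → ℝ) (a : ℝ) :
    pexp n (fun σ => g σ / a) = pexp n g / a := by
  simp only [pexp_eq_expect, expect_div]

lemma pexp_mono {g₁ g₂ : Equiv.Perm (Fin n) → ℝ} (hg : ∀ σ, g₁ σ ≤ g₂ σ) :
    pexp n g₁ ≤ pexp n g₂ := by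
  simp only [pexp_eq_expect]
  exact expect_le_expect fun σ _ => hg σ

lemma pexp_nonneg {g : Equiv.Perm (Fin n) → ℝ} (hg : ∀ σ, 0 ≤ g σ) : 0 ≤ pexp n g := by
  simpa [pexp_const] using pexp_mono hg

lemma pexp_pos {g : Equiv.Perm (Fin n) → ℝ} (hg : ∀ σ, 0 < g σ) : 0 < pexp n g := by
  simp only [pexp_eq_expect]
  exact expect_pos (fun σ _ => hg σ) univ_nonempty

lemma le_factorial_mul_pexp {g : Equiv.Perm (Fin n) → ℝ} (hg : ∀ σ, 0 ≤ g σ)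
    (σ : Equiv.Perm (Fin n)) : g σ ≤ n ! * pexp n g := by
  rw [pexp, mul_div_cancel₀ _ (by positivity)]
  exact single_le_sum (fun τ _ => hg τ) (mem_univ σ)

lemma pexp_comp_segRev (hx : x < n) (hh : h ≤ n) (g : (Fin n → Fin n) → ℝ) :
    pexp n (fun σ => g (segRev x h ⇑σ)) = pexp n (fun σ => g ⇑σ) := by
  simp only [pexp, segRev_coe_perm hx hh]
  congr 1
  exact Equiv.sum_comp (Equiv.mulRight _) (fun σ : Equiv.Perm (Fin n) => g ⇑σ)

lemma pexp_ite_halfEvent (a b : ℝ) :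
    pexp n (fun σ => if halfEvent n ⇑σ then a else b) =
      b + (a - b) * pexp n (fun σ => xiInd n ⇑σ) := by
  have hite : ∀ σ : Equiv.Perm (Fin n),
      (if halfEvent n ⇑σ then a else b) = b + (a - b) * xiInd n ⇑σ := by
    intro σ; unfold xiInd; split_ifs <;> ring
  simp only [hite]
  rw [pexp_add, pexp_const, pexp_const_mul]

noncomputable def revEnergy (n x ℓ : ℕ) (f : (Fin n → Fin n) → ℝ) : ℝ :=
  pexp n (fun σ => (f (segRev x ℓ ⇑σ) - f ⇑σ) ^ 2)

lemma dirL_eq_sum_revEnergy (f : (Fin n → Fin n) → ℝ) :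
    dirL n L f = 1 / (2 * n * L) * ∑ x ∈ range n, ∑ ℓ ∈ Icc 1 L, revEnergy n x ℓ f :=
  rfl

lemma revEnergy_nonneg (f : (Fin n → Fin n) → ℝ) : 0 ≤ revEnergy n x h f :=
  pexp_nonneg fun _ => sq_nonneg _

lemma dirL_nonneg (f : (Fin n → Fin n) → ℝ) : 0 ≤ dirL n L f :=
  mul_nonneg (by positivity) (sum_nonneg fun _ _ => sum_nonneg fun _ _ => revEnergy_nonneg f)

lemma sq_sub_le_dirL {ℓ : ℕ} (f : (Fin n → Fin n) → ℝ) (hx : x < n) (hℓ : ℓ ∈ Icc 1 L)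
    (σ : Equiv.Perm (Fin n)) :
    (f (segRev x ℓ ⇑σ) - f ⇑σ) ^ 2 ≤ 2 * n * L * n ! * dirL n L f := by
  obtain ⟨hℓ1, hℓL⟩ := mem_Icc.mp hℓ
  have hL : (0 : ℝ) < L := by exact_mod_cast (by omega : 0 < L)
  have hn : (0 : ℝ) < n := by exact_mod_cast (by omega : 0 < n)
  have hσ : (f (segRev x ℓ ⇑σ) - f ⇑σ) ^ 2 ≤ n ! * revEnergy n x ℓ f :=
    le_factorial_mul_pexp (g := fun τ => (f (segRev x ℓ ⇑τ) - f ⇑τ) ^ 2)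
      (fun _ => sq_nonneg _) σ
  have hxℓ : revEnergy n x ℓ f ≤ ∑ y ∈ range n, ∑ k ∈ Icc 1 L, revEnergy n y k f :=
    (single_le_sum (f := fun k => revEnergy n x k f) (fun _ _ => revEnergy_nonneg f) hℓ).trans
      (single_le_sum (f := fun y => ∑ k ∈ Icc 1 L, revEnergy n y k f)
        (fun _ _ => sum_nonneg fun _ _ => revEnergy_nonneg f) (mem_range.mpr hx))
  have hdir : 2 * n * L * dirL n L f = ∑ y ∈ range n, ∑ k ∈ Icc 1 L, revEnergy n y k f := by
    rw [dirL_eq_sum_revEnergy, ← mul_assoc, mul_one_div_cancel (by positivity), one_mul]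
  calc (f (segRev x ℓ ⇑σ) - f ⇑σ) ^ 2 ≤ n ! * revEnergy n x ℓ f := hσ
    _ ≤ n ! * (2 * n * L * dirL n L f) := by rw [hdir]; gcongr
    _ = 2 * n * L * n ! * dirL n L f := by ring

end Uniform

section HalfEvent

variable {n x h L : ℕ}

lemma halfEvent_comp_iff (e : Equiv.Perm (Fin n)) (he : ∀ y, (e y).val < n / 2 ↔ y.val < n / 2)
    (η : Fin n → Fin n) : halfEvent n (η ∘ e) ↔ halfEvent n η := by
  refine ⟨fun H z => ?_, fun H y => (he y).symm.trans (H (e y))⟩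
  simpa using (he (e.symm z)).trans (H (e.symm z))

lemma halfEvent_segRev_iff (hx : x < n) (hh : h ≤ n)
    (hhalf : x + h < n / 2 ∨ n / 2 ≤ x ∧ x + h < n) (η : Fin n → Fin n) :
    halfEvent n (segRev x h η) ↔ halfEvent n η := by
  rw [segRev_eq_comp]
  exact halfEvent_comp_iff (revPerm hx hh) (val_segRev_id_lt_half_iff hx hh hhalf) η

lemma sq_sub_ite_halfEvent_le {c₀ c₁ : ℝ} (hc : (c₁ - c₀) ^ 2 ≤ 1) (a b : Fin n → Fin n) :
    ((if halfEvent n a then c₁ else c₀) - (if halfEvent n b then c₁ else c₀)) ^ 2 ≤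
      xiInd n a + xiInd n b := by
  unfold xiInd
  split_ifs <;> nlinarith

lemma revEnergy_ite_halfEvent_le {c₀ c₁ : ℝ} (hc : (c₁ - c₀) ^ 2 ≤ 1) (hx : x < n)
    (hh : h ≤ n) :
    revEnergy n x h (fun a => if halfEvent n a then c₁ else c₀) ≤
      2 * pexp n (fun σ => xiInd n ⇑σ) :=
  calc revEnergy n x h (fun a => if halfEvent n a then c₁ else c₀)
      ≤ pexp n (fun σ => xiInd n (segRev x h ⇑σ) + xiInd n ⇑σ) :=
        pexp_mono fun σ => sq_sub_ite_halfEvent_le hc _ _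
    _ = 2 * pexp n (fun σ => xiInd n ⇑σ) := by
        rw [pexp_add, pexp_comp_segRev hx hh (xiInd n)]; ring

lemma revEnergy_ite_halfEvent_eq_zero (c₀ c₁ : ℝ) (hx : x < n) (hh : h ≤ n)
    (hhalf : x + h < n / 2 ∨ n / 2 ≤ x ∧ x + h < n) :
    revEnergy n x h (fun a => if halfEvent n a then c₁ else c₀) = 0 := by
  simp [revEnergy, halfEvent_segRev_iff hx hh hhalf, pexp]

lemma card_crossing_le :
    #{x ∈ range n | ¬(x + L < n / 2 ∨ n / 2 ≤ x ∧ x + L < n)} ≤ 2 * L :=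
  calc #{x ∈ range n | ¬(x + L < n / 2 ∨ n / 2 ≤ x ∧ x + L < n)}
      ≤ #(Ico (n / 2 - L) (n / 2) ∪ Ico (n - L) n) :=
        card_le_card fun x hx => by simp only [mem_filter, mem_range] at hx; simp; omega
    _ ≤ 2 * L := (card_union_le _ _).trans (by simp; omega)

lemma dirL_ite_halfEvent_le {c₀ c₁ : ℝ} (hc : (c₁ - c₀) ^ 2 ≤ 1) (hLn : L ≤ n) :
    dirL n L (fun a => if halfEvent n a then c₁ else c₀) ≤
      2 * L / n * pexp n (fun σ => xiInd n ⇑σ) := by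
  set u : (Fin n → Fin n) → ℝ := fun a => if halfEvent n a then c₁ else c₀
  set p := pexp n (fun σ => xiInd n ⇑σ)
  have hp : 0 ≤ p := pexp_nonneg fun σ => by unfold xiInd; split_ifs <;> norm_num
  have hrow : ∀ x ∈ range n, ∑ ℓ ∈ Icc 1 L, revEnergy n x ℓ u ≤ L * (2 * p) := fun x hx =>
    (sum_le_card_nsmul _ _ _ fun ℓ hℓ => revEnergy_ite_halfEvent_le hc (mem_range.mp hx)
      ((mem_Icc.mp hℓ).2.trans hLn)).trans_eq
        (by rw [Nat.card_Icc, nsmul_eq_mul, Nat.add_sub_cancel])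
  have hcross : ∀ x ∈ range n, ∑ ℓ ∈ Icc 1 L, revEnergy n x ℓ u ≠ 0 →
      ¬(x + L < n / 2 ∨ n / 2 ≤ x ∧ x + L < n) := fun x hx hne hhalf =>
    hne <| sum_eq_zero fun ℓ hℓ => revEnergy_ite_halfEvent_eq_zero c₀ c₁ (mem_range.mp hx)
      ((mem_Icc.mp hℓ).2.trans hLn) (by have := (mem_Icc.mp hℓ).2; omega)
  have hsum : ∑ x ∈ range n, ∑ ℓ ∈ Icc 1 L, revEnergy n x ℓ u ≤ 2 * L * (L * (2 * p)) := by
    rw [← sum_filter_of_ne hcross]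
    refine (sum_le_card_nsmul _ _ _ fun x hx => hrow x (mem_filter.mp hx).1).trans ?_
    rw [nsmul_eq_mul]
    gcongr
    exact_mod_cast card_crossing_le
  rw [dirL_eq_sum_revEnergy]
  calc 1 / (2 * n * L) * ∑ x ∈ range n, ∑ ℓ ∈ Icc 1 L, revEnergy n x ℓ u
      ≤ 1 / (2 * n * L) * (2 * L * (L * (2 * p))) := by gcongr
    _ = 2 * L / n * p := by
        rcases eq_or_ne (L : ℝ) 0 with hL | hL
        · simp [hL]
        · field_simp

end HalfEvent

section Entropy

variable {n L : ℕ}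

lemma entF_le_pexp_sq_sub_div {f : (Fin n → Fin n) → ℝ} (hf : ∀ σ : Equiv.Perm (Fin n), 0 < f ⇑σ)
    (c : ℝ) : entF n f ≤ pexp n (fun σ => (f ⇑σ - c) ^ 2) / pexp n (fun σ => f ⇑σ) := by
  set m := pexp n (fun σ => f ⇑σ)
  have hm : 0 < m := pexp_pos hf
  have hent : entF n f ≤ pexp n (fun σ => f ⇑σ ^ 2) / m - m := by
    rw [entF, ← pexp_mul_const, ← pexp_sub, ← pexp_div_const, ← pexp_sub]
    exact pexp_mono fun σ => mul_log_sub_mul_log_le (hf σ) hm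
  have hvar : pexp n (fun σ => (f ⇑σ - c) ^ 2) =
      pexp n (fun σ => f ⇑σ ^ 2) - 2 * m * c + c ^ 2 := by
    simp only [sub_sq]
    rw [pexp_add, pexp_sub, pexp_mul_const, pexp_const_mul, pexp_const]
  calc entF n f ≤ pexp n (fun σ => f ⇑σ ^ 2) / m - m := hent
    _ ≤ pexp n (fun σ => (f ⇑σ - c) ^ 2) / m := by
        rw [hvar, div_sub' hm.ne', div_le_div_iff_of_pos_right hm]
        nlinarith [sq_nonneg (m - c)]

/-- A crude log-Sobolev inequality; its constant is irrelevant, it only keeps the supremum in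
`logSobolev_lower_bound` away from the junk value `sSup = 0` of a set unbounded above. -/
lemma entF_le_mul_dirL_sqrt (hn : 0 < n) (hL : 1 ≤ L) :
    ∃ K : ℝ, 0 ≤ K ∧ ∀ f : (Fin n → Fin n) → ℝ, (∀ σ : Equiv.Perm (Fin n), 0 < f ⇑σ) →
      entF n f ≤ K * dirL n L (fun a => √(f a)) := by
  obtain ⟨m, rfl⟩ : ∃ m, n = m + 1 := ⟨n - 1, by omega⟩
  obtain ⟨D, hD⟩ :=
    exists_abs_sub_le_mul_of_mclosure_eq_top (Equiv.Perm.mclosure_swap_castSucc_succ m)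
  set N : ℝ := (Nat.factorial (m + 1) : ℝ)
  set c : ℝ := 2 * (m + 1 : ℕ) * L * N
  refine ⟨4 * D ^ 2 * c * N, by positivity, fun f hf => ?_⟩
  set u : (Fin (m + 1) → Fin (m + 1)) → ℝ := fun a => √(f a)
  set E := dirL (m + 1) L u
  set μ := pexp (m + 1) (fun σ => f ⇑σ)
  have hμ : 0 < μ := pexp_pos hf
  have hstep : ∀ σ, ∀ s ∈ Set.range fun i : Fin m => Equiv.swap i.castSucc i.succ,
      |u ⇑(σ * s) - u ⇑σ| ≤ √(c * E) := by
    rintro σ _ ⟨i, rfl⟩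
    rw [← segRev_one_coe_perm, ← Real.sqrt_sq_eq_abs]
    exact Real.sqrt_le_sqrt (sq_sub_le_dirL u (by omega) (by simp [hL]) σ)
  have hdev : ∀ σ : Equiv.Perm (Fin (m + 1)),
      (f ⇑σ - f ⇑(1 : Equiv.Perm (Fin (m + 1)))) ^ 2 ≤ 4 * D ^ 2 * c * N * E * μ := by
    intro σ
    have hsq : ∀ τ : Equiv.Perm (Fin (m + 1)), u ⇑τ ^ 2 = f ⇑τ := fun τ => Real.sq_sqrt (hf τ).le
    have hmax : ∀ τ : Equiv.Perm (Fin (m + 1)), u ⇑τ ≤ √(N * μ) := fun τ =>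
      Real.sqrt_le_sqrt (le_factorial_mul_pexp (fun τ => (hf τ).le) τ)
    have h := sq_sub_sq_sq_le (Real.sqrt_nonneg _) (Real.sqrt_nonneg _)
      (hD (fun τ => u ⇑τ) _ (Real.sqrt_nonneg _) hstep σ) (hmax σ) (hmax 1)
    rw [hsq, hsq, mul_pow, Real.sq_sqrt (mul_nonneg (by positivity) (dirL_nonneg u)),
      Real.sq_sqrt (by positivity)] at h
    linarith
  calc entF (m + 1) f
      ≤ pexp (m + 1) (fun σ => (f ⇑σ - f ⇑(1 : Equiv.Perm (Fin (m + 1)))) ^ 2) / μ :=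
        entF_le_pexp_sq_sub_div hf _
    _ ≤ 4 * D ^ 2 * c * N * E * μ / μ := by
        gcongr
        simpa [pexp_const] using pexp_mono hdev
    _ = 4 * D ^ 2 * c * N * E := by field_simp

end Entropy

section HalfProbability

variable {n : ℕ}

lemma card_halfEvent_le :
    #{σ : Equiv.Perm (Fin n) | halfEvent n ⇑σ} ≤ (n / 2)! * (n - n / 2)! := by
  let p : Fin n → Prop := fun y => y.val < n / 2
  calc #{σ : Equiv.Perm (Fin n) | halfEvent n ⇑σ}
      ≤ #((univ : Finset (Equiv.Perm {y // p y} × Equiv.Perm {y // ¬p y})).image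
          fun e => e.1.subtypeCongr e.2) := by
        refine card_le_card fun σ hσ => mem_image.mpr ?_
        have hσ : halfEvent n ⇑σ := (mem_filter.mp hσ).2
        refine ⟨(σ.subtypePerm fun y => (hσ y).symm,
          σ.subtypePerm fun y => not_congr (hσ y).symm), mem_univ _, ?_⟩
        ext y
        by_cases hy : p y <;> simp [hy]
    _ ≤ (n / 2)! * (n - n / 2)! := by
        refine card_image_le.trans_eq ?_
        rw [card_univ, Fintype.card_prod, Fintype.card_perm, Fintype.card_perm,
          Fintype.card_subtype_compl, Fintype.card_fin_lt_of_le (Nat.div_le_self n 2),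
          Fintype.card_fin]

lemma pexp_xiInd_eq :
    pexp n (fun σ => xiInd n ⇑σ) = #{σ : Equiv.Perm (Fin n) | halfEvent n ⇑σ} / n ! := by
  rw [pexp, ← sum_boole]
  rfl

lemma pexp_xiInd_le_half_pow (hn : Even n) :
    pexp n (fun σ => xiInd n ⇑σ) ≤ (1 / 2) ^ (n / 2) := by
  obtain ⟨k, rfl⟩ := hn
  have hk : (k + k) / 2 = k := by omega
  have hfact : (k + k)! = Nat.centralBinom k * (k ! * k !) := by
    rw [← Nat.choose_mul_factorial_mul_factorial (show k ≤ k + k by omega), Nat.centralBinom,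
      two_mul, Nat.add_sub_cancel, mul_assoc]
  have hcard : (#{σ : Equiv.Perm (Fin (k + k)) | halfEvent (k + k) ⇑σ} : ℝ) ≤ k ! * k ! := by
    have := card_halfEvent_le (n := k + k)
    rw [hk, Nat.add_sub_cancel] at this
    exact_mod_cast this
  calc pexp (k + k) (fun σ => xiInd (k + k) ⇑σ) ≤ (k ! * k ! : ℝ) / (k + k)! := by
        rw [pexp_xiInd_eq]; gcongr
    _ = 1 / Nat.centralBinom k := by
        rw [hfact, Nat.cast_mul, Nat.cast_mul]
        field_simp
    _ ≤ 1 / 2 ^ k := by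
        gcongr
        exact_mod_cast two_pow_le_centralBinom k
    _ = (1 / 2) ^ ((k + k) / 2) := by rw [hk, one_div_pow]

end HalfProbability

section TestFunction

variable {n L : ℕ}

lemma entF_ite_halfEvent (δ : ℝ) :
    entF n (fun a => if halfEvent n a then 1 + δ else δ) =
      pexp n (fun σ => xiInd n ⇑σ) * ((1 + δ) * Real.log (1 + δ)) +
        (1 - pexp n (fun σ => xiInd n ⇑σ)) * (δ * Real.log δ) -
        (pexp n (fun σ => xiInd n ⇑σ) + δ) * Real.log (pexp n (fun σ => xiInd n ⇑σ) + δ) := by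
  have hlog : ∀ a : Fin n → Fin n,
      (if halfEvent n a then 1 + δ else δ) * Real.log (if halfEvent n a then 1 + δ else δ) =
        if halfEvent n a then (1 + δ) * Real.log (1 + δ) else δ * Real.log δ := fun a => by
    split_ifs <;> rfl
  simp only [entF, hlog]
  rw [pexp_ite_halfEvent, pexp_ite_halfEvent, add_sub_cancel_right, one_mul, add_comm δ]
  ring

lemma halfEvent_id : halfEvent n id := fun _ => Iff.rfl

lemma pexp_xiInd_pos : 0 < pexp n (fun σ => xiInd n ⇑σ) := by
  have h := le_factorial_mul_pexp (g := fun σ => xiInd n ⇑σ)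
    (fun σ => by unfold xiInd; split_ifs <;> norm_num) 1
  rw [show xiInd n ⇑(1 : Equiv.Perm (Fin n)) = 1 from if_pos halfEvent_id] at h
  exact pos_of_mul_pos_right (one_pos.trans_le h) (Nat.cast_nonneg _)

lemma neg_log_pexp_xiInd_ge (hn : Even n) :
    (n : ℝ) / 4 ≤ -Real.log (pexp n (fun σ => xiInd n ⇑σ)) := by
  have hp := pexp_xiInd_le_half_pow hn
  obtain ⟨k, rfl⟩ := hn
  rw [show (k + k) / 2 = k by omega] at hp
  have hlog := Real.log_le_log pexp_xiInd_pos hp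
  rw [Real.log_pow, one_div, Real.log_inv] at hlog
  push_cast
  nlinarith [Real.log_two_gt_d9, (Nat.cast_nonneg k : (0 : ℝ) ≤ k)]

lemma not_halfEvent_segRev_one_id (hn : 2 ≤ n) :
    ¬halfEvent n (segRev (n / 2 - 1) 1 (id : Fin n → Fin n)) := by
  intro H
  have h := H ⟨n / 2 - 1, by omega⟩
  rw [segRev_one_id_eq_swap (by omega), Equiv.swap_apply_left] at h
  simp only at h
  omega

lemma dirL_ite_halfEvent_pos (hn : 2 ≤ n) (hL : 1 ≤ L) {c₀ c₁ : ℝ} (hc : c₀ ≠ c₁) :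
    0 < dirL n L (fun a => if halfEvent n a then c₁ else c₀) := by
  have h := sq_sub_le_dirL (L := L) (ℓ := 1) (fun a => if halfEvent n a then c₁ else c₀)
    (x := n / 2 - 1) (by omega) (by simp [hL]) 1
  rw [Equiv.Perm.coe_one, if_neg (not_halfEvent_segRev_one_id hn), if_pos halfEvent_id] at h
  have hsq : 0 < (c₀ - c₁) ^ 2 := sq_pos_of_ne_zero (sub_ne_zero.mpr hc)
  exact pos_of_mul_pos_right (hsq.trans_le h) (by positivity)

lemma exists_entF_div_dirL_ge (hn : Even n) (hn0 : 0 < n) (hL : 1 ≤ L) (hLn : L ≤ n) :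
    ∃ f : (Fin n → Fin n) → ℝ, (∀ σ : Equiv.Perm (Fin n), 0 < f ⇑σ) ∧
      (∃ σ τ : Equiv.Perm (Fin n), f ⇑σ ≠ f ⇑τ) ∧
      (n : ℝ) ^ 2 / (16 * L) ≤ entF n f / dirL n L (fun a => √(f a)) := by
  have hn2 : 2 ≤ n := by obtain ⟨k, rfl⟩ := hn; omega
  set p := pexp n (fun σ => xiInd n ⇑σ)
  have hp : 0 < p := pexp_xiInd_pos
  have hp2 : p ≤ 1 / 2 := (pexp_xiInd_le_half_pow hn).trans
    (pow_le_of_le_one (by norm_num) (by norm_num) (by omega))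
  set δ := p ^ 6
  set f : (Fin n → Fin n) → ℝ := fun a => if halfEvent n a then 1 + δ else δ
  have hsqrt : (fun a => √(f a)) = fun a => if halfEvent n a then √(1 + δ) else √δ := by
    funext a; simp only [f]; split_ifs <;> rfl
  have hgap : √δ < √(1 + δ) := Real.sqrt_lt_sqrt (by positivity) (by linarith)
  have hE : 0 < dirL n L (fun a => √(f a)) :=
    hsqrt ▸ dirL_ite_halfEvent_pos hn2 hL hgap.ne
  have hdir : dirL n L (fun a => √(f a)) ≤ 2 * L / n * p := by
    rw [hsqrt]
    refine dirL_ite_halfEvent_le ?_ hLn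
    have h₁ := Real.sq_sqrt (by positivity : 0 ≤ 1 + δ)
    have h₀ := Real.sq_sqrt (by positivity : 0 ≤ δ)
    nlinarith [Real.sqrt_nonneg δ]
  have hent : p * n / 8 ≤ entF n f := by
    rw [entF_ite_halfEvent]
    have h₁ := neg_mul_log_le_two_mul_entropy_two_point hp hp2
    have h₂ := mul_le_mul_of_nonneg_left (neg_log_pexp_xiInd_ge hn) hp.le
    nlinarith
  have hx : n / 2 - 1 < n := by omega
  refine ⟨f, fun σ => ?_, ⟨1 * revPerm hx (by omega : 1 ≤ n), 1, ?_⟩, ?_⟩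
  · simp only [f]; split_ifs <;> positivity
  · rw [← segRev_coe_perm, Equiv.Perm.coe_one]
    simp only [f, if_neg (not_halfEvent_segRev_one_id hn2), if_pos halfEvent_id]
    linarith
  · have hpn : 0 < p * n := mul_pos hp (by exact_mod_cast hn0)
    have hL' : (0 : ℝ) < L := by exact_mod_cast hL
    calc (n : ℝ) ^ 2 / (16 * L) = (p * n / 8) / (2 * L / n * p) := by field_simp; ring
      _ ≤ entF n f / dirL n L (fun a => √(f a)) := div_le_div₀ (by linarith) hent hE hdir

end TestFunction

lemma bddAbove_entF_div_dirL {n L : ℕ} (hn : 0 < n) (hL : 1 ≤ L) :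
    BddAbove {r : ℝ | ∃ f : (Fin n → Fin n) → ℝ,
      (∀ η : Equiv.Perm (Fin n), 0 < f ⇑η) ∧
      (∃ σ τ : Equiv.Perm (Fin n), f ⇑σ ≠ f ⇑τ) ∧
      r = entF n f / dirL n L (fun c => Real.sqrt (f c))} := by
  obtain ⟨K, hK0, hK⟩ := entF_le_mul_dirL_sqrt hn hL
  refine ⟨K, ?_⟩
  rintro _ ⟨f, hf, -, rfl⟩
  rcases (dirL_nonneg (L := L) fun c => √(f c)).eq_or_lt with hE | hE
  · rwa [← hE, div_zero]
  · exact (div_le_iff₀ hE).mpr (hK f hf)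

/-- `E(√ξ,√ξ) = E(ξ,ξ) ≤ (C L/n) ν[ξ]` for a universal constant `C`, and
consequently the log-Sobolev constant
`s(n,L) = sup { Ent(f)/E(√f,√f) : f positive and nonconstant }`
satisfies `s(n,L) ≥ n²/(C' L)` for a universal constant `C'`. -/
theorem logSobolev_lower_bound :
    ∃ C C' : ℝ, 0 < C ∧ 0 < C' ∧ ∀ n L : ℕ, Even n → 0 < n → 1 ≤ L → L ≤ n →
      (dirL n L (fun η => Real.sqrt (xiInd n η)) = dirL n L (xiInd n) ∧
        dirL n L (xiInd n) ≤ C * (L : ℝ) / (n : ℝ) * pexp n (fun η => xiInd n ⇑η)) ∧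
      (n : ℝ) ^ 2 / (C' * (L : ℝ)) ≤
        sSup {r : ℝ | ∃ f : (Fin n → Fin n) → ℝ,
          (∀ η : Equiv.Perm (Fin n), 0 < f ⇑η) ∧
          (∃ σ τ : Equiv.Perm (Fin n), f ⇑σ ≠ f ⇑τ) ∧
          r = entF n f / dirL n L (fun c => Real.sqrt (f c))} := by
  refine ⟨2, 16, by norm_num, by norm_num, fun n L hn hn0 hL hLn => ⟨⟨?_, ?_⟩, ?_⟩⟩
  · congr 1
    funext a
    unfold xiInd
    split_ifs <;> simp
  · exact dirL_ite_halfEvent_le (c₀ := 0) (c₁ := 1) (by norm_num) hLn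
  · obtain ⟨f, hf, hne, hratio⟩ := exists_entF_div_dirL_ge hn hn0 hL hLn
    exact hratio.trans (le_csSup (bddAbove_entF_div_dirL hn0 hL) ⟨f, hf, hne, rfl⟩)
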